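/- Let E be an elliptic curve over a field K with char(K) ≠ 3, P ∈ E(K) non-torsion, and R a point with 3R = P such that [K(x(R)):K] ≤ 2. Then R is defined over K(x(R)), i.e., y(R) ∈ K(x(R)), so P has a preimage under multiplication by 3 defined over an extension of degree at most 2. -/

import Mathlib

/-! Put `F = K(x)` and suppose `y ∉ F`. The Weierstrass equation is a monic quadratic in `y` over
`F`, so it is the minimal polynomial of `y`, and its other root `negY x y` gives an `F`-embedding
`σ` of `F(y)` with `σ y = negY x y`. Thus `σ R = -R`, while `3R = P` is fixed by `σ`; hence
`P = -P`, contradicting that `P` is non-torsion. -/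

open WeierstrassCurve WeierstrassCurve.Affine Polynomial

open scoped Classical

universe u

/-- A model of an isogeny defined over `K` between elliptic curves given by Weierstrass
models `E` and `E'` over `K`, of degree `d`: a compatible family of group homomorphisms on
points over every field extension of `K`, whose kernel over any algebraically closed
extension of `K` is finite of cardinality `d`. -/
structure KIsogeny (K : Type u) [Field K] (E E' : WeierstrassCurve K) (d : ℕ) where
  hom : ∀ (L : Type u) [Field L] [Algebra K L], Affine.Point (E.baseChange L) →+ Affine.Point (E'.baseChange L)
  compat : ∀ (L : Type u) [Field L] [Algebra K L] (M : Type u) [Field M] [Algebra K M]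
    (f : L →ₐ[K] M) (P : Affine.Point (E.baseChange L)),
      hom M (Point.map (W' := E) f P) = Point.map (W' := E') f (hom L P)
  card_ker : ∀ (L : Type u) [Field L] [Algebra K L] [IsAlgClosed L],
      Nat.card (AddMonoidHom.ker (hom L)) = d

open IntermediateField

theorem exists_algHom_adjoin_gen_eq_of_quadratic {F L : Type*} [Field F] [Field L] [Algebra F L]
    {y : L} {b c : F} (hy : y ^ 2 + algebraMap F L b * y + algebraMap F L c = 0)
    (hyF : y ∉ (algebraMap F L).range) :
    ∃ σ : F⟮y⟯ →ₐ[F] L, σ (AdjoinSimple.gen F y) = -y - algebraMap F L b := by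
  set q : F[X] := X ^ 2 + C b * X + C c with hq_def
  have hq : q.Monic := by rw [hq_def]; monicity!
  have hq_deg : q.natDegree = 2 := by rw [hq_def]; compute_degree!
  have hq_root : ∀ z : L, z ^ 2 + algebraMap F L b * z + algebraMap F L c = 0 → aeval z q = 0 :=
    fun z hz => by simpa [q, ← Polynomial.algebraMap_apply] using hz
  have hint : IsIntegral F y := ⟨q, hq, by rw [← aeval_def]; exact hq_root y hy⟩
  have hdvd : minpoly F y ∣ q := minpoly.dvd F y (hq_root y hy)
  have hmin : minpoly F y = q := by
    refine (eq_of_monic_of_dvd_of_natDegree_le (minpoly.monic hint) hq hdvd ?_).symm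
    have hne_one : (minpoly F y).natDegree ≠ 1 := mt minpoly.natDegree_eq_one_iff.mp hyF
    have hpos := minpoly.natDegree_pos hint
    have hle := hq_deg ▸ natDegree_le_of_dvd hdvd hq.ne_zero
    omega
  have hconj : -y - algebraMap F L b ∈ (minpoly F y).aroots L := by
    rw [mem_aroots, hmin]
    exact ⟨hq.ne_zero, hq_root _ (by linear_combination hy)⟩
  exact ⟨(algHomAdjoinIntegralEquiv F hint).symm ⟨_, hconj⟩,
    algHomAdjoinIntegralEquiv_symm_apply_gen F hint _⟩

section Descent

variable {K F M L : Type*} [Field K] [Field F] [Field M] [Field L] [Algebra K F] [Algebra K M]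
  [Algebra K L] [Algebra F M] [Algebra F L] [IsScalarTower K F M] [IsScalarTower K F L]
  {E : WeierstrassCurve K}

theorem exists_algHom_adjoin_gen_eq_negY {x : F} {y : L}
    (h : (E.baseChange L).toAffine.Equation (algebraMap F L x) y)
    (hy : y ∉ (algebraMap F L).range) :
    ∃ σ : F⟮y⟯ →ₐ[F] L,
      σ (AdjoinSimple.gen F y) = (E.baseChange L).toAffine.negY (algebraMap F L x) y := by
  have hcoeff : ∀ a : K, algebraMap K L a = algebraMap F L (algebraMap K F a) :=
    IsScalarTower.algebraMap_apply K F L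
  obtain ⟨σ, hσ⟩ := exists_algHom_adjoin_gen_eq_of_quadratic (y := y)
    (b := algebraMap K F E.a₁ * x + algebraMap K F E.a₃)
    (c := -(x ^ 3 + algebraMap K F E.a₂ * x ^ 2 + algebraMap K F E.a₄ * x
      + algebraMap K F E.a₆))
    (by rw [equation_iff] at h
        simp only [WeierstrassCurve.baseChange, map_a₁, map_a₂, map_a₃, map_a₄, map_a₆,
          hcoeff] at h
        simp only [map_add, map_mul, map_neg, map_pow]
        linear_combination h)
    hy
  refine ⟨σ, hσ.trans ?_⟩
  simp only [negY, WeierstrassCurve.baseChange, map_a₁, map_a₃, hcoeff, map_add, map_mul]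
  ring

theorem WeierstrassCurve.Affine.Point.baseChange_baseChange [DecidableEq K] [DecidableEq F] [DecidableEq L]
    (P : Affine.Point (E.baseChange K)) :
    Point.baseChange F L (Point.baseChange K F P) = Point.baseChange (W' := E) K L P := by
  rw [← Point.map_baseChange (IsScalarTower.toAlgHom K F L)]
  cases Point.baseChange (W' := E) K F P <;> rfl

theorem two_nsmul_eq_zero_of_map_eq_neg_map [DecidableEq F] [DecidableEq M] [DecidableEq L]
    (f g : M →ₐ[F] L)
    {R : Affine.Point (E.baseChange M)} {P : Affine.Point (E.baseChange F)} {n : ℕ}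
    (hR : n • Point.map f R = Point.baseChange F L P) (hneg : Point.map g R = -Point.map f R) :
    2 • P = 0 := by
  have hRM : n • R = Point.baseChange F M P :=
    Point.map_injective f (by rw [map_nsmul, hR, Point.map_baseChange])
  have hPL : Point.baseChange F L P = -Point.baseChange F L P := calc
    Point.baseChange F L P = Point.map g (Point.baseChange F M P) := (Point.map_baseChange g P).symm
    _ = n • Point.map g R := by rw [← hRM, map_nsmul]
    _ = -Point.baseChange F L P := by rw [hneg, smul_neg, hR]
  apply Point.map_injective (Algebra.ofId F L)
  rw [map_nsmul, map_zero, two_nsmul, ← eq_neg_iff_add_eq_zero]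
  exact hPL

theorem mem_range_of_nsmul_some_eq_baseChange [DecidableEq F] [DecidableEq L] {x y : L}
    (h : (E.baseChange L).toAffine.Nonsingular x y) {P : Affine.Point (E.baseChange F)}
    (hP : 2 • P ≠ 0) {n : ℕ} (hR : n • Point.some x y h = Point.baseChange F L P)
    (hx : x ∈ (algebraMap F L).range) : y ∈ (algebraMap F L).range := by
  obtain ⟨x, rfl⟩ := hx
  by_contra hy
  obtain ⟨σ, hσ⟩ := exists_algHom_adjoin_gen_eq_negY h.1 hy
  have hM : (E.baseChange F⟮y⟯).toAffine.Nonsingular (algebraMap F F⟮y⟯ x)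
      (AdjoinSimple.gen F y) :=
    (baseChange_nonsingular (W := E) (f := (F⟮y⟯).val) (F⟮y⟯).val.injective _ _).mp h
  have hι : Point.map (F⟮y⟯).val (Point.some _ _ hM) = Point.some _ _ h := rfl
  have hσR : Point.map σ (Point.some _ _ hM) = -Point.some _ _ h := by
    simp only [Point.map_some, Point.neg_some, hσ, AlgHom.commutes]
  exact hP (two_nsmul_eq_zero_of_map_eq_neg_map (F⟮y⟯).val σ (hι ▸ hR) (hι ▸ hσR))

end Descent

theorem stmt16_general (K : Type u) [Field K]
    (E : WeierstrassCurve K)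
    (P : Affine.Point (E.baseChange K)) (hP : ∀ n : ℕ, n ≠ 0 → n • P ≠ 0)
    (L : Type u) [Field L] [Algebra K L]
    (x y : L) (h : (E.baseChange L).toAffine.Nonsingular x y)
    (R : Affine.Point (E.baseChange L)) (hReq : R = Point.some x y h)
    (hR : 3 • R = Point.baseChange (W' := E) K L P)
    (hdeg : Module.finrank K (IntermediateField.adjoin K ({x} : Set L)) ≤ 2) :
    y ∈ IntermediateField.adjoin K ({x} : Set L) ∧
      ∃ (M : IntermediateField K L) (R' : Affine.Point (E.baseChange ↥M)),
        Module.finrank K ↥M ≤ 2 ∧ Point.map (W' := E) M.val R' = R ∧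
          3 • R' = Point.baseChange (W' := E) K ↥M P := by
  set F := K⟮x⟯
  have hxF : x ∈ F := mem_adjoin_simple_self K x
  have h2P : 2 • Point.baseChange K F P ≠ 0 := by
    rw [← map_nsmul, ← map_zero (Point.baseChange (W' := E) K F)]
    exact (Point.map_injective _).ne (hP 2 two_ne_zero)
  have h3R : 3 • Point.some x y h = Point.baseChange F L (Point.baseChange K F P) := by
    rw [← hReq, hR]
    exact (Point.baseChange_baseChange P).symm
  have hx : x ∈ (algebraMap F L).range := ⟨⟨x, hxF⟩, rfl⟩
  obtain ⟨y', hy'⟩ := mem_range_of_nsmul_some_eq_baseChange h h2P h3R hx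
  have hyF : y ∈ F := hy' ▸ y'.2
  have hF : (E.baseChange F).toAffine.Nonsingular ⟨x, hxF⟩ ⟨y, hyF⟩ :=
    (baseChange_nonsingular (W := E) (f := F.val) F.val.injective _ _).mp h
  have hR' : Point.map F.val (Point.some _ _ hF) = R := by
    rw [Point.map_some, hReq]
    rfl
  refine ⟨hyF, F, Point.some _ _ hF, hdeg, hR', Point.map_injective F.val ?_⟩
  rw [map_nsmul, hR', hR, Point.map_baseChange]

/-- If `3R = P` with `P` non-torsion and `[K(x(R)) : K] ≤ 2`, then `R` is defined over
`K(x(R))`: `y(R) ∈ K(x(R))`, so `P` has a `3`-division preimage over an extension of degree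
at most `2`. -/
theorem stmt16 (K : Type u) [Field K] (hchar3 : ringChar K ≠ 3)
    (E : WeierstrassCurve K) [E.IsElliptic]
    (P : Affine.Point (E.baseChange K)) (hP : ∀ n : ℕ, n ≠ 0 → n • P ≠ 0)
    (L : Type u) [Field L] [Algebra K L]
    (x y : L) (h : (E.baseChange L).toAffine.Nonsingular x y)
    (R : Affine.Point (E.baseChange L)) (hReq : R = Point.some x y h)
    (hR : 3 • R = Point.baseChange (W' := E) K L P)
    (hdeg : Module.finrank K (IntermediateField.adjoin K ({x} : Set L)) ≤ 2) :
    y ∈ IntermediateField.adjoin K ({x} : Set L) ∧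
      ∃ (M : IntermediateField K L) (R' : Affine.Point (E.baseChange ↥M)),
        Module.finrank K ↥M ≤ 2 ∧ Point.map (W' := E) M.val R' = R ∧
          3 • R' = Point.baseChange (W' := E) K ↥M P :=
  stmt16_general K E P hP L x y h R hReq hR hdeg
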